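/- Let 𝒞 = {φ_λ : ℝ⁺ → ℝ^d : φ_λ(t) = t ψ_λ(t), ψ_λ(t) ∈ S^{d−1}, ψ_λ(1) = λ, λ ∈ S^{d−1}} be a family of curves completely fibrating ℝ^d \ {0}, and suppose there exist c > 0 and an increasing function f : ℝ → ℝ with f(z) → ∞ as z → ∞ such that |t₁ψ_{λ₁}(t₁) − t₂ψ_{λ₂}(t₂)| ≥ c f(min{t₁,t₂}) |λ₁ − λ₂| for all λ₁, λ₂ ∈ S^{d−1} and t₁, t₂ ∈ ℝ⁺. Let a ∈ L^∞(ℝ^d) and a_∞ ∈ C(S^{d−1}) satisfy lim_{t→∞} a(φ_λ(t)) = a_∞(λ) uniformly in λ ∈ S^{d−1}. Then a satisfies Tartar's condition: for every R > 0 and ε > 0 there exists r > 0 such that |ξ|, |η| > r and |ξ − η| ≤ R imply |a(ξ) − a(η)| < ε. -/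
import Mathlib


open MeasureTheory Filter Topology
open scoped FourierTransform

/-- If `a ∈ L^∞(ℝ^d)` converges, uniformly along the fibres of a curvilinear fibration of
`ℝ^d \ {0}` satisfying the separation estimate, to a continuous function `a_∞` on the unit
sphere, then `a` satisfies Tartar's condition. -/
theorem stmt1 (d : ℕ)
    (ψ : EuclideanSpace ℝ (Fin d) → ℝ → EuclideanSpace ℝ (Fin d))
    (hψ_sphere : ∀ lam : EuclideanSpace ℝ (Fin d), ‖lam‖ = 1 → ∀ t : ℝ, 0 < t → ‖ψ lam t‖ = 1)
    (hψ_one : ∀ lam : EuclideanSpace ℝ (Fin d), ‖lam‖ = 1 → ψ lam 1 = lam)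
    (hfib : ∀ x : EuclideanSpace ℝ (Fin d), x ≠ 0 →
      ∃! p : ℝ × EuclideanSpace ℝ (Fin d), 0 < p.1 ∧ ‖p.2‖ = 1 ∧ x = p.1 • ψ p.2 p.1)
    (c : ℝ) (hc : 0 < c) (f : ℝ → ℝ) (hf_mono : StrictMono f)
    (hf_top : Tendsto f atTop atTop)
    (hsep : ∀ lam₁ lam₂ : EuclideanSpace ℝ (Fin d), ‖lam₁‖ = 1 → ‖lam₂‖ = 1 →
      ∀ t₁ t₂ : ℝ, 0 < t₁ → 0 < t₂ →
        c * f (min t₁ t₂) * ‖lam₁ - lam₂‖ ≤ ‖t₁ • ψ lam₁ t₁ - t₂ • ψ lam₂ t₂‖)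
    (a : EuclideanSpace ℝ (Fin d) → ℂ) (Ca : ℝ) (ha_bdd : ∀ ξ, ‖a ξ‖ ≤ Ca)
    (ainf : EuclideanSpace ℝ (Fin d) → ℂ)
    (hainf : ContinuousOn ainf (Metric.sphere (0 : EuclideanSpace ℝ (Fin d)) 1))
    (hconv : ∀ ε > (0:ℝ), ∃ T : ℝ, ∀ t > T, ∀ lam : EuclideanSpace ℝ (Fin d), ‖lam‖ = 1 →
      ‖a (t • ψ lam t) - ainf lam‖ < ε) :
    ∀ R > (0:ℝ), ∀ ε > (0:ℝ), ∃ r > (0:ℝ), ∀ ξ η : EuclideanSpace ℝ (Fin d),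
      r < ‖ξ‖ → r < ‖η‖ → ‖ξ - η‖ ≤ R → ‖a ξ - a η‖ < ε := by
  intro R hR ε hε
  have hcompact : IsCompact (Metric.sphere (0 : EuclideanSpace ℝ (Fin d)) 1) :=
    isCompact_sphere 0 1
  have hUC := hcompact.uniformContinuousOn_of_continuous hainf
  rw [Metric.uniformContinuousOn_iff] at hUC
  obtain ⟨δ, hδ, hδ'⟩ := hUC (ε/4) (by linarith)
  obtain ⟨T, hT⟩ := hconv (ε/4) (by linarith)
  obtain ⟨M, hM⟩ := eventually_atTop.mp (hf_top.eventually_gt_atTop (R/(c*δ)))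
  set r : ℝ := max (max T M) 1 with hrdef
  have hr0 : (0:ℝ) < r := lt_of_lt_of_le one_pos (le_max_right _ _)
  refine ⟨r, hr0, ?_⟩
  intro ξ η hξr hηr hd
  have hξ0 : ξ ≠ 0 := by
    intro h; rw [h, norm_zero] at hξr; linarith
  have hη0 : η ≠ 0 := by
    intro h; rw [h, norm_zero] at hηr; linarith
  obtain ⟨⟨t₁, lam₁⟩, ⟨ht₁, hlam₁, hξ⟩, -⟩ := hfib ξ hξ0
  obtain ⟨⟨t₂, lam₂⟩, ⟨ht₂, hlam₂, hη⟩, -⟩ := hfib η hη0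
  have hnξ : ‖ξ‖ = t₁ := by
    rw [hξ, norm_smul, hψ_sphere lam₁ hlam₁ t₁ ht₁, mul_one, Real.norm_eq_abs,
      abs_of_pos ht₁]
  have hnη : ‖η‖ = t₂ := by
    rw [hη, norm_smul, hψ_sphere lam₂ hlam₂ t₂ ht₂, mul_one, Real.norm_eq_abs,
      abs_of_pos ht₂]
  have ht₁r : r < t₁ := hnξ ▸ hξr
  have ht₂r : r < t₂ := hnη ▸ hηr
  have hmin : M ≤ min t₁ t₂ := by
    have : M ≤ r := le_trans (le_max_right _ _) (le_max_left _ _)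
    exact le_trans this (le_of_lt (lt_min ht₁r ht₂r))
  have hfmin : R / (c * δ) < f (min t₁ t₂) := hM _ hmin
  have hfpos : 0 < f (min t₁ t₂) :=
    lt_of_le_of_lt (div_nonneg hR.le (mul_pos hc hδ).le) hfmin
  -- separation gives closeness of lam₁ and lam₂
  have hsep' := hsep lam₁ lam₂ hlam₁ hlam₂ t₁ t₂ ht₁ ht₂
  rw [← hξ, ← hη] at hsep'
  have hlamclose : ‖lam₁ - lam₂‖ < δ := by
    by_contra h
    push_neg at h
    have h1 : c * f (min t₁ t₂) * δ ≤ c * f (min t₁ t₂) * ‖lam₁ - lam₂‖ :=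
      mul_le_mul_of_nonneg_left h (mul_pos hc hfpos).le
    have h2 : R < c * δ * f (min t₁ t₂) := by
      rw [div_lt_iff₀ (mul_pos hc hδ)] at hfmin
      linarith [hfmin]
    nlinarith [le_trans h1 (le_trans hsep' hd)]
  -- ainf values close
  have hmem₁ : lam₁ ∈ Metric.sphere (0 : EuclideanSpace ℝ (Fin d)) 1 :=
    mem_sphere_zero_iff_norm.mpr hlam₁
  have hmem₂ : lam₂ ∈ Metric.sphere (0 : EuclideanSpace ℝ (Fin d)) 1 :=
    mem_sphere_zero_iff_norm.mpr hlam₂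
  have hainfclose : dist (ainf lam₁) (ainf lam₂) < ε/4 := by
    apply hδ' lam₁ hmem₁ lam₂ hmem₂
    rw [dist_eq_norm]; exact hlamclose
  have hTr : T ≤ r := le_trans (le_max_left _ _) (le_max_left _ _)
  have h1 := hT t₁ (lt_of_le_of_lt hTr ht₁r) lam₁ hlam₁
  have h2 := hT t₂ (lt_of_le_of_lt hTr ht₂r) lam₂ hlam₂
  rw [← hξ] at h1
  rw [← hη] at h2
  calc ‖a ξ - a η‖ = ‖(a ξ - ainf lam₁) + (ainf lam₁ - ainf lam₂) + (ainf lam₂ - a η)‖ := by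
        ring_nf
    _ ≤ ‖(a ξ - ainf lam₁) + (ainf lam₁ - ainf lam₂)‖ + ‖ainf lam₂ - a η‖ := norm_add_le _ _
    _ ≤ ‖a ξ - ainf lam₁‖ + ‖ainf lam₁ - ainf lam₂‖ + ‖ainf lam₂ - a η‖ := by
        gcongr; exact norm_add_le _ _
    _ < ε/4 + ε/4 + ε/4 := by
        apply add_lt_add (add_lt_add h1 ?_) ?_
        · rw [← dist_eq_norm]; exact hainfclose
        · rw [norm_sub_rev]; exact h2
    _ < ε := by linarith
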